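/- For every k ∈ M, A_k = {v(k), v(k)+1, …, k}; that is, the node set of each subtree of the cost-per-capacity graph is a set of consecutive indices whose maximum is the root k. -/

import Mathlib

/-!
If `z < w < p z`, then `w` is not a candidate parent of `z` (it lies below the minimum `p z`),
so `r z / g z ≤ r w / g w` and `p z` is a candidate parent of `w`; hence `w < p w ≤ p z`, and
iterating, `p z` is an ancestor of `w`. Walking up the ancestor chain from `v k` to `k`, every
`w ∈ [v k, k]` lies between some node of the chain and its parent, so `k` is an ancestor of `w`.
Conversely ancestors only increase, so `A k ⊆ [v k, k]`.
-/

open scoped Classical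
open Finset MeasureTheory

namespace BSHM

noncomputable section

/-- The set of candidate parents of machine type `i`: types `j ∈ M` with `j > i`
and a strictly smaller normalized cost rate per capacity unit. -/
def pset (m : ℕ) (g r : ℕ → ℝ) (i : ℕ) : Set ℕ :=
  {j | j ≤ m ∧ i < j ∧ r j / g j < r i / g i}

/-- The parent `p i` of machine type `i` (equal to `0` when the parent is undefined,
since any actual parent has index `≥ 2`). -/
def p (m : ℕ) (g r : ℕ → ℝ) (i : ℕ) : ℕ := sInf (pset m g r i)

/-- `pdef i` asserts that the parent of `i` is defined. -/
def pdef (m : ℕ) (g r : ℕ → ℝ) (i : ℕ) : Prop := (pset m g r i).Nonempty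

/-- One step of the parent relation: `b` is the (defined) parent of `a`. -/
def pstep (m : ℕ) (g r : ℕ → ℝ) (a b : ℕ) : Prop :=
  pdef m g r a ∧ b = p m g r a

/-- `P i`: the set consisting of `i` together with all of its iterated parents. -/
def P (m : ℕ) (g r : ℕ → ℝ) (i : ℕ) : Set ℕ :=
  {z | Relation.ReflTransGen (pstep m g r) i z}

/-- `A i`: the set of nodes in the tree rooted at `i`,
i.e. all `z ∈ M` having `i` as an ancestor (or equal to `i`). -/
def A (m : ℕ) (g r : ℕ → ℝ) (i : ℕ) : Set ℕ :=
  {z | 1 ≤ z ∧ z ≤ m ∧ i ∈ P m g r z}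

/-- `v i`: the lowest-indexed node in the tree rooted at `i`. -/
def v (m : ℕ) (g r : ℕ → ℝ) (i : ℕ) : ℕ := sInf (A m g r i)

/-- `y i`: the younger siblings of `i` (same parent status, smaller index). -/
def y (m : ℕ) (g r : ℕ → ℝ) (i : ℕ) : Set ℕ :=
  {z | 1 ≤ z ∧ z ≤ m ∧ z < i ∧ p m g r z = p m g r i}

/-- `esib i`: the elder siblings of `i`. -/
def esib (m : ℕ) (g r : ℕ → ℝ) (i : ℕ) : Set ℕ :=
  {z | 1 ≤ z ∧ z ≤ m ∧ i < z ∧ p m g r z = p m g r i}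

/-- `T k := {k} ∪ ⋃_{z ∈ P(k)} y(z)`. -/
def T (m : ℕ) (g r : ℕ → ℝ) (k : ℕ) : Set ℕ :=
  {k} ∪ ⋃ z ∈ P m g r k, y m g r z

/-- `T k` as a `Finset` (all relevant nodes lie in `{k} ∪ [1, m]`). -/
def TIcc (m : ℕ) (g r : ℕ → ℝ) (k : ℕ) : Finset ℕ :=
  (insert k (Finset.Icc 1 m)).filter (fun z => z ∈ T m g r k)

end

end BSHM

namespace BSHM

variable {m : ℕ} {g r : ℕ → ℝ}

lemma p_mem_pset {i : ℕ} (h : pdef m g r i) : p m g r i ∈ pset m g r i :=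
  Nat.sInf_mem h

lemma p_le_of_mem_pset {i j : ℕ} (h : j ∈ pset m g r i) : p m g r i ≤ j :=
  Nat.sInf_le h

lemma lt_of_pstep {a b : ℕ} (h : pstep m g r a b) : a < b :=
  h.2 ▸ (p_mem_pset h.1).2.1

lemma le_of_mem_P {i z : ℕ} (h : z ∈ P m g r i) : i ≤ z := by
  induction h with
  | refl => exact le_rfl
  | tail _ hstep ih => exact ih.trans (lt_of_pstep hstep).le

lemma p_mem_pset_of_lt_of_lt_p {z w : ℕ} (hz : pdef m g r z) (hzw : z < w)
    (hwp : w < p m g r z) (hwm : w ≤ m) : p m g r z ∈ pset m g r w := by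
  have hp := p_mem_pset hz
  have hratio : r z / g z ≤ r w / g w := by
    by_contra! hlt
    exact (p_le_of_mem_pset ⟨hwm, hzw, hlt⟩).not_gt hwp
  exact ⟨hp.1, hwp, hp.2.2.trans_le hratio⟩

lemma p_mem_P_of_lt_of_lt_p {z w : ℕ} (hz : pdef m g r z) (hzw : z < w)
    (hwp : w < p m g r z) (hwm : w ≤ m) : p m g r z ∈ P m g r w := by
  have hcand := p_mem_pset_of_lt_of_lt_p hz hzw hwp hwm
  have hw : pdef m g r w := ⟨_, hcand⟩
  have hstep : pstep m g r w (p m g r w) := ⟨hw, rfl⟩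
  rcases (p_le_of_mem_pset hcand).eq_or_lt with heq | hlt
  · exact .single (heq ▸ hstep)
  · have hwpw := p_mem_pset hw
    exact .head hstep (p_mem_P_of_lt_of_lt_p hz (hzw.trans hwpw.2.1) hlt hwpw.1)
termination_by p m g r z - w
decreasing_by exact Nat.sub_lt_sub_left hwp (p_mem_pset hw).2.1

lemma mem_P_of_mem_P_of_le_of_le {z k : ℕ} (h : k ∈ P m g r z) {w : ℕ} (hzw : z ≤ w)
    (hwk : w ≤ k) (hwm : w ≤ m) : k ∈ P m g r w := by
  induction h using Relation.ReflTransGen.head_induction_on generalizing w with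
  | refl => exact le_antisymm hwk hzw ▸ .refl
  | @head a c hstep hrest ih =>
    rcases hzw.eq_or_lt with rfl | haw
    · exact .head hstep hrest
    rcases lt_or_ge w c with hwc | hcw
    · obtain ⟨ha, rfl⟩ := hstep
      exact (p_mem_P_of_lt_of_lt_p ha haw hwc hwm).trans hrest
    · exact ih hcw hwk hwm

theorem statement_1_general (m : ℕ) (g r : ℕ → ℝ) :
    ∀ k, 1 ≤ k → k ≤ m → A m g r k = Set.Icc (v m g r k) k := by
  intro k hk1 hkm
  have hkA : k ∈ A m g r k := ⟨hk1, hkm, .refl⟩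
  have hvA : v m g r k ∈ A m g r k := Nat.sInf_mem ⟨k, hkA⟩
  ext z
  refine ⟨fun hz => ⟨Nat.sInf_le hz, le_of_mem_P hz.2.2⟩, fun ⟨hvz, hzk⟩ => ?_⟩
  have hzm : z ≤ m := hzk.trans hkm
  exact ⟨hvA.1.trans hvz, hzm, mem_P_of_mem_P_of_le_of_le hvA.2.2 hvz hzk hzm⟩

/-- For every `k ∈ M`, `A k = {v k, v k + 1, …, k}`:
the node set of each subtree of the cost-per-capacity graph is a set of
consecutive indices whose maximum is the root `k`. -/
theorem statement_1 (m : ℕ) (g r : ℕ → ℝ)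
    (hm : 1 ≤ m)
    (hg1 : 0 < g 1) (hr1 : 0 < r 1)
    (hg : ∀ i j, 1 ≤ i → i < j → j ≤ m → g i < g j)
    (hr : ∀ i j, 1 ≤ i → i < j → j ≤ m → r i < r j) :
    ∀ k, 1 ≤ k → k ≤ m → A m g r k = Set.Icc (v m g r k) k :=
  statement_1_general m g r

end BSHM
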